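/- arXiv:2512.06359 — 7 statements merged into one kernel-verified Lean document; each statement's English description precedes it below -/
import Mathlib

section
/- Let A ∈ ℝ^{m×n} have full row rank m, and let U ∈ ℝ^{(n−m)×n} be a matrix of full row rank whose rows form a basis of ker(A) (so AUᵀ = 0). Then for every positive semidefinite symmetric matrix X ∈ Sym(n,ℝ), AX = 0 holds if and only if there exists a symmetric positive semidefinite matrix Θ ∈ Sym(n−m,ℝ) with X = Uᵀ Θ U. -/
open Matrix

theorem stmt_2 {m n : ℕ} (A : Matrix (Fin m) (Fin n) ℝ)
    (U : Matrix (Fin (n - m)) (Fin n) ℝ)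
    (hA : A.rank = m) (hU : U.rank = n - m) (hAU : A * Uᵀ = 0)
    (X : Matrix (Fin n) (Fin n) ℝ) (hX : X.PosSemidef) :
    A * X = 0 ↔
      ∃ Θ : Matrix (Fin (n - m)) (Fin (n - m)) ℝ, Θ.PosSemidef ∧ X = Uᵀ * Θ * U := by
  constructor
  · intro hAX
    -- G := U Uᵀ is invertible
    set G : Matrix (Fin (n - m)) (Fin (n - m)) ℝ := U * Uᵀ with hG
    have hGrank : G.rank = n - m := by rw [hG, rank_self_mul_transpose, hU]
    have hGunit : IsUnit G := by
      rw [← Matrix.mulVec_surjective_iff_isUnit]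
      have : LinearMap.range G.mulVecLin = ⊤ := by
        apply Submodule.eq_top_of_finrank_eq
        rw [← Matrix.rank, hGrank]
        simp [Module.finrank_pi]
      intro v
      have := this ▸ Submodule.mem_top (x := v) (R := ℝ)
      obtain ⟨w, hw⟩ := this
      exact ⟨w, hw⟩
    have hGdet : IsUnit G.det := (Matrix.isUnit_iff_isUnit_det G).mp hGunit
    have hGinv : G⁻¹ * G = 1 := Matrix.nonsing_inv_mul G hGdet
    have hGinvr : G * G⁻¹ = 1 := Matrix.mul_nonsing_inv G hGdet
    -- G symmetric, so G⁻¹ symmetric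
    have hGsymm : Gᵀ = G := by rw [hG, transpose_mul, transpose_transpose]
    have hGinvsymm : (G⁻¹)ᵀ = G⁻¹ := by rw [Matrix.transpose_nonsing_inv, hGsymm]
    -- kernel of A equals range of Uᵀ
    have hmn : m ≤ n := by
      have := A.rank_le_card_width
      simpa [hA] using this
    have hle : LinearMap.range (Uᵀ).mulVecLin ≤ LinearMap.ker A.mulVecLin := by
      rintro x ⟨w, rfl⟩
      simp only [LinearMap.mem_ker, Matrix.mulVecLin_apply, Matrix.mulVec_mulVec, hAU]
      simp
    have hrn : Module.finrank ℝ (LinearMap.range A.mulVecLin) +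
        Module.finrank ℝ (LinearMap.ker A.mulVecLin) = n := by
      rw [LinearMap.finrank_range_add_finrank_ker]
      simp [Module.finrank_pi]
    have hker : Module.finrank ℝ (LinearMap.ker A.mulVecLin) = n - m := by
      have : Module.finrank ℝ (LinearMap.range A.mulVecLin) = m := hA
      omega
    have hrange : Module.finrank ℝ (LinearMap.range (Uᵀ).mulVecLin) = n - m := by
      rw [← Matrix.rank, Matrix.rank_transpose, hU]
    have heq : LinearMap.range (Uᵀ).mulVecLin = LinearMap.ker A.mulVecLin :=
      Submodule.eq_of_le_of_finrank_le hle (by rw [hker, hrange])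
    -- every column of X is in range of Uᵀ
    have hcol : ∀ j, ∃ w, Uᵀ.mulVec w = fun i => X i j := by
      intro j
      have hmem : (fun i => X i j) ∈ LinearMap.ker A.mulVecLin := by
        rw [LinearMap.mem_ker]
        ext i
        have := congrFun (congrFun hAX i) j
        simpa [Matrix.mul_apply, Matrix.mulVecLin_apply, Matrix.mulVec, dotProduct]
          using this
      rw [← heq] at hmem
      obtain ⟨w, hw⟩ := hmem
      exact ⟨w, hw⟩
    choose w hw using hcol
    set W : Matrix (Fin (n - m)) (Fin n) ℝ := Matrix.of (fun k j => w j k) with hWdef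
    have hXW : X = Uᵀ * W := by
      ext i j
      have := congrFun (hw j) i
      simpa [Matrix.mul_apply, Matrix.mulVec, dotProduct, hWdef] using this.symm
    -- projection P
    have hP : Uᵀ * G⁻¹ * U * X = X := by
      calc Uᵀ * G⁻¹ * U * X = Uᵀ * G⁻¹ * U * (Uᵀ * W) := by rw [← hXW]
        _ = Uᵀ * (G⁻¹ * (U * Uᵀ)) * W := by simp only [Matrix.mul_assoc]
        _ = Uᵀ * W := by rw [← hG, hGinv, Matrix.mul_one]
        _ = X := hXW.symm
    have hXsymm : Xᵀ = X := by
      rw [← Matrix.conjTranspose_eq_transpose_of_trivial, hX.1.eq]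
    have hP' : X * Uᵀ * G⁻¹ * U = X := by
      have := congrArg Matrix.transpose hP
      simpa [Matrix.transpose_mul, hGinvsymm, hXsymm, Matrix.mul_assoc] using this
    refine ⟨G⁻¹ * U * X * Uᵀ * G⁻¹, ?_, ?_⟩
    · have h1 : (G⁻¹ * U)ᴴ = Uᵀ * G⁻¹ := by
        rw [Matrix.conjTranspose_eq_transpose_of_trivial, Matrix.transpose_mul, hGinvsymm]
      have := hX.mul_mul_conjTranspose_same (G⁻¹ * U)
      rw [h1] at this
      simpa [Matrix.mul_assoc] using this
    · calc X = Uᵀ * G⁻¹ * U * X := hP.symm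
        _ = Uᵀ * G⁻¹ * U * (X * Uᵀ * G⁻¹ * U) := by rw [hP']
        _ = Uᵀ * (G⁻¹ * U * X * Uᵀ * G⁻¹) * U := by simp only [Matrix.mul_assoc]
  · rintro ⟨Θ, hΘ, rfl⟩
    calc A * (Uᵀ * Θ * U) = (A * Uᵀ) * (Θ * U) := by simp only [Matrix.mul_assoc]
      _ = 0 := by rw [hAU, Matrix.zero_mul]
end

section
/- Let A ∈ ℝ^{m×n} have full row rank, J = I − Aᵀ(AAᵀ)⁻¹A, and let G ∈ Sym(n,ℝ). If X ⪰ 0, AX = 0, XS = 0 and S = G − AᵀU − UᵀA ⪰ 0 for some U, then the matrix Ŝ := JGJ satisfies Ŝ ⪰ 0 and XŜ = 0. -/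
open Matrix

/-- The orthogonal projector onto the null space of `A`. -/
noncomputable def projMat {m n : ℕ} (A : Matrix (Fin m) (Fin n) ℝ) : Matrix (Fin n) (Fin n) ℝ :=
  1 - Aᵀ * (A * Aᵀ)⁻¹ * A

lemma isUnit_AAT {m n : ℕ} (A : Matrix (Fin m) (Fin n) ℝ) (hA : A.rank = m) :
    IsUnit (A * Aᵀ) := by
  have hr : (A * Aᵀ).rank = Fintype.card (Fin m) := by
    rw [Matrix.rank_self_mul_transpose, hA, Fintype.card_fin]
  -- rank = card → surjective mulVecLin → injective → isUnit
  rw [← Matrix.mulVec_injective_iff_isUnit]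
  have hsurj : Function.Surjective (A * Aᵀ).mulVecLin := by
    rw [← LinearMap.range_eq_top]
    apply Submodule.eq_top_of_finrank_eq
    rw [← Matrix.rank]  -- rank is defined as finrank of range of mulVecLin
    simpa using hr
  have hinj := (LinearMap.injective_iff_surjective (f := (A * Aᵀ).mulVecLin)).mpr hsurj
  rwa [Matrix.coe_mulVecLin] at hinj

theorem stmt_6 {m n : ℕ} (A : Matrix (Fin m) (Fin n) ℝ) (hA : A.rank = m)
    (G : Matrix (Fin n) (Fin n) ℝ) (hG : G.IsSymm)
    (X : Matrix (Fin n) (Fin n) ℝ) (U : Matrix (Fin m) (Fin n) ℝ)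
    (hX : X.PosSemidef) (hAX : A * X = 0)
    (hS : (G - Aᵀ * U - Uᵀ * A).PosSemidef)
    (hXS : X * (G - Aᵀ * U - Uᵀ * A) = 0) :
    (projMat A * G * projMat A).PosSemidef ∧ X * (projMat A * G * projMat A) = 0 := by
  set S := G - Aᵀ * U - Uᵀ * A with hSdef
  have hU : IsUnit (A * Aᵀ) := isUnit_AAT A hA
  have hUdet : IsUnit (A * Aᵀ).det := (Matrix.isUnit_iff_isUnit_det _).mp hU
  have hinv : (A * Aᵀ) * (A * Aᵀ)⁻¹ = 1 := Matrix.mul_nonsing_inv _ hUdet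
  have hinv' : (A * Aᵀ)⁻¹ * (A * Aᵀ) = 1 := Matrix.nonsing_inv_mul _ hUdet
  set J := projMat A with hJdef
  have hAJ : A * J = 0 := by
    simp only [hJdef, projMat, Matrix.mul_sub, Matrix.mul_one]
    rw [← Matrix.mul_assoc, ← Matrix.mul_assoc, hinv, Matrix.one_mul, sub_self]
  have hJt : Jᵀ = J := by
    simp only [hJdef, projMat, Matrix.transpose_sub, Matrix.transpose_one,
      Matrix.transpose_mul, Matrix.transpose_transpose]
    rw [Matrix.transpose_nonsing_inv]
    simp [Matrix.transpose_mul, Matrix.transpose_transpose, Matrix.mul_assoc]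
  have hJA : J * Aᵀ = 0 := by
    calc J * Aᵀ = (A * Jᵀ)ᵀ := by simp [Matrix.transpose_mul, hJt]
    _ = 0 := by rw [hJt, hAJ, Matrix.transpose_zero]
  have hJSJ : J * S * J = J * G * J := by
    simp only [hSdef, Matrix.mul_sub, Matrix.sub_mul]
    rw [← Matrix.mul_assoc J Aᵀ U, hJA]
    have : J * (Uᵀ * A) * J = 0 := by
      rw [Matrix.mul_assoc, Matrix.mul_assoc, hAJ, Matrix.mul_zero, Matrix.mul_zero]
    rw [this]
    simp
  have hJH : Jᴴ = J := by
    rw [show Jᴴ = Jᵀ from rfl]; exact hJt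
  have hpsd : (J * G * J).PosSemidef := by
    rw [← hJSJ]
    have := hS.mul_mul_conjTranspose_same J
    rwa [hJH] at this
  have hXt : Xᵀ = X := by
    have := hX.isHermitian.eq
    simpa using this
  have hJX : J * X = X := by
    simp only [hJdef, projMat, Matrix.sub_mul, Matrix.one_mul]
    rw [Matrix.mul_assoc, hAX, Matrix.mul_zero, sub_zero]
  have hXJ : X * J = X := by
    calc X * J = (Jᵀ * Xᵀ)ᵀ := by simp [Matrix.transpose_mul]
    _ = X := by rw [hJt, hXt, hJX, hXt]
  refine ⟨hpsd, ?_⟩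
  rw [← hJSJ, ← Matrix.mul_assoc, ← Matrix.mul_assoc, hXJ, Matrix.mul_assoc,
    ← Matrix.mul_assoc X S J, hXS, Matrix.zero_mul]
end

section
/- Let A ∈ ℝ^{m×n} have full row rank, J = I − Aᵀ(AAᵀ)⁻¹A, and G ∈ Sym(n,ℝ). Suppose X ⪰ 0 with AX = 0 satisfies JGJ ⪰ 0 and X(JGJ) = 0. Define V := (AAᵀ)⁻¹A·G·(I − ½Aᵀ(AAᵀ)⁻¹A). Then S := G − AᵀV − VᵀA equals JGJ; consequently S ⪰ 0 and ⟨X, S⟩ = 0. -/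
open Matrix

/-! Write `P = Aᵀ(AAᵀ)⁻¹A`, so `J = 1 - P`. Since `(AAᵀ)⁻¹` and `G` are symmetric,
`AᵀV = PG(1 - P/2)` and `VᵀA = (1 - P/2)GP`; the two halves of `PGP` they contribute recombine
into the cross term of `(1 - P)G(1 - P) = G - PG - GP + PGP`, purely algebraically. Then `S = JGJ`
is positive semidefinite by hypothesis, and `⟨X, S⟩ = tr(X · JGJ) = 0` because `X` is symmetric. -/

namespace Matrix

theorem isSymm_mul_transpose_self' {m n α : Type*} [Fintype n] [CommSemiring α]
    (A : Matrix m n α) : (A * Aᵀ).IsSymm := by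
  rw [IsSymm, transpose_mul, transpose_transpose]

variable {m n α : Type*} [Fintype m] [DecidableEq m] [CommRing α]

theorem IsSymm.nonsing_inv {B : Matrix m m α} (hB : B.IsSymm) : B⁻¹.IsSymm := by
  rw [IsSymm, transpose_nonsing_inv, hB.eq]

theorem isSymm_transpose_mul_inv_mul [Fintype n] (A : Matrix m n α) :
    (Aᵀ * (A * Aᵀ)⁻¹ * A).IsSymm := by
  rw [IsSymm, transpose_mul, transpose_mul, transpose_transpose,
    (isSymm_mul_transpose_self' A).nonsing_inv.eq, Matrix.mul_assoc]

end Matrix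

theorem sub_mul_mul_sub_half_smul {K R : Type*} [Field K] [NeZero (2 : K)] [Ring R]
    [Algebra K R] (P G : R) :
    G - P * G * (1 - (1 / 2 : K) • P) - (1 - (1 / 2 : K) • P) * G * P
      = (1 - P) * G * (1 - P) := by
  have hsplit : P * G * ((1 / 2 : K) • P) + (1 / 2 : K) • P * G * P = P * G * P := by
    rw [mul_smul_comm, smul_mul_assoc, smul_mul_assoc, ← add_smul, one_div, ← two_mul,
      mul_inv_cancel₀ two_ne_zero, one_smul]
  calc _ = G - P * G - G * P + (P * G * ((1 / 2 : K) • P) + (1 / 2 : K) • P * G * P) := by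
          noncomm_ring
    _ = (1 - P) * G * (1 - P) := by rw [hsplit]; noncomm_ring

theorem sub_transpose_mul_sub_transpose_mul_eq_projMat {m n : ℕ} (A : Matrix (Fin m) (Fin n) ℝ)
    {G : Matrix (Fin n) (Fin n) ℝ} (hG : G.IsSymm) :
    let V : Matrix (Fin m) (Fin n) ℝ :=
      (A * Aᵀ)⁻¹ * A * G * (1 - (1/2 : ℝ) • (Aᵀ * (A * Aᵀ)⁻¹ * A))
    G - Aᵀ * V - Vᵀ * A = projMat A * G * projMat A := by
  intro V
  set P := Aᵀ * (A * Aᵀ)⁻¹ * A with hP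
  have hAtV : Aᵀ * V = P * G * (1 - (1 / 2 : ℝ) • P) := by
    simp only [V, P, Matrix.mul_assoc]
  have hVtA : Vᵀ * A = (1 - (1 / 2 : ℝ) • P) * G * P := by
    simp only [V, transpose_mul, transpose_sub, transpose_one, transpose_smul,
      (isSymm_transpose_mul_inv_mul A).eq, hG.eq, (isSymm_mul_transpose_self' A).nonsing_inv.eq]
    simp only [P, Matrix.mul_assoc]
  rw [hAtV, hVtA, projMat, ← hP, sub_mul_mul_sub_half_smul]

theorem stmt_7_general {m n : ℕ} (A : Matrix (Fin m) (Fin n) ℝ)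
    (G : Matrix (Fin n) (Fin n) ℝ) (hG : G.IsSymm)
    (X : Matrix (Fin n) (Fin n) ℝ) (hX : X.PosSemidef)
    (hhatS : (projMat A * G * projMat A).PosSemidef)
    (hXhatS : X * (projMat A * G * projMat A) = 0) :
    let V : Matrix (Fin m) (Fin n) ℝ :=
      (A * Aᵀ)⁻¹ * A * G * (1 - (1/2 : ℝ) • (Aᵀ * (A * Aᵀ)⁻¹ * A))
    G - Aᵀ * V - Vᵀ * A = projMat A * G * projMat A ∧
      (G - Aᵀ * V - Vᵀ * A).PosSemidef ∧
      Matrix.trace (Xᵀ * (G - Aᵀ * V - Vᵀ * A)) = 0 := by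
  intro V
  have hS : G - Aᵀ * V - Vᵀ * A = projMat A * G * projMat A :=
    sub_transpose_mul_sub_transpose_mul_eq_projMat A hG
  have hXsymm : Xᵀ = X := (isHermitian_iff_isSymm.mp hX.isHermitian).eq
  exact ⟨hS, hS ▸ hhatS, by rw [hS, hXsymm, hXhatS, trace_zero]⟩

theorem stmt_7 {m n : ℕ} (A : Matrix (Fin m) (Fin n) ℝ) (hA : A.rank = m)
    (G : Matrix (Fin n) (Fin n) ℝ) (hG : G.IsSymm)
    (X : Matrix (Fin n) (Fin n) ℝ) (hX : X.PosSemidef) (hAX : A * X = 0)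
    (hhatS : (projMat A * G * projMat A).PosSemidef)
    (hXhatS : X * (projMat A * G * projMat A) = 0) :
    let V : Matrix (Fin m) (Fin n) ℝ :=
      (A * Aᵀ)⁻¹ * A * G * (1 - (1/2 : ℝ) • (Aᵀ * (A * Aᵀ)⁻¹ * A))
    G - Aᵀ * V - Vᵀ * A = projMat A * G * projMat A ∧
      (G - Aᵀ * V - Vᵀ * A).PosSemidef ∧
      Matrix.trace (Xᵀ * (G - Aᵀ * V - Vᵀ * A)) = 0 :=
  stmt_7_general A G hG X hX hhatS hXhatS
end

section
/- Let A ∈ ℝ^{m×n} have full row rank and J = I − Aᵀ(AAᵀ)⁻¹A. For any G ∈ Sym(n,ℝ), the projection of G onto the set {X ∈ Sym(n,ℝ) : X ⪰ 0, AX = 0} (with respect to the Frobenius norm) equals Π_{S₊ⁿ}(JGJ), where Π_{S₊ⁿ} denotes the Euclidean projection onto the PSD cone. -/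
open Matrix

/-- Squared Frobenius norm. -/
def frobSq {n : ℕ} (M : Matrix (Fin n) (Fin n) ℝ) : ℝ := Matrix.trace (Mᵀ * M)

lemma frobSq_nonneg {n : ℕ} (M : Matrix (Fin n) (Fin n) ℝ) : 0 ≤ frobSq M := by
  unfold frobSq Matrix.trace
  apply Finset.sum_nonneg
  intro i _
  simp only [diag_apply, mul_apply, transpose_apply]
  exact Finset.sum_nonneg fun j _ => mul_self_nonneg _

lemma frobSq_eq_zero {n : ℕ} {M : Matrix (Fin n) (Fin n) ℝ} (h : frobSq M = 0) : M = 0 := by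
  ext i j
  unfold frobSq Matrix.trace at h
  have h2 : ∀ k ∈ Finset.univ, (0:ℝ) ≤ (Mᵀ * M).diag k :=
    fun k _ => by
      simp only [diag_apply, mul_apply, transpose_apply]
      exact Finset.sum_nonneg fun l _ => mul_self_nonneg _
  have := (Finset.sum_eq_zero_iff_of_nonneg h2).mp h j (Finset.mem_univ j)
  simp only [diag_apply, mul_apply, transpose_apply] at this
  have h3 : ∀ k ∈ Finset.univ, (0:ℝ) ≤ M k j * M k j := fun k _ => mul_self_nonneg _
  have := (Finset.sum_eq_zero_iff_of_nonneg h3).mp this i (Finset.mem_univ i)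
  simpa [mul_self_eq_zero] using this

lemma frobSq_add {n : ℕ} (X Y : Matrix (Fin n) (Fin n) ℝ) :
    frobSq (X + Y) = frobSq X + 2 * Matrix.trace (Xᵀ * Y) + frobSq Y := by
  have h : Matrix.trace (Yᵀ * X) = Matrix.trace (Xᵀ * Y) := by
    rw [← trace_transpose (Yᵀ * X), transpose_mul, transpose_transpose]
  simp only [frobSq, transpose_add, add_mul, mul_add, trace_add, h]
  ring

lemma projMat_transpose {m n : ℕ} (A : Matrix (Fin m) (Fin n) ℝ) :
    (projMat A)ᵀ = projMat A := by
  simp only [projMat, transpose_sub, transpose_one, transpose_mul, transpose_transpose,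
    transpose_nonsing_inv]
  rw [Matrix.mul_assoc]

lemma A_mul_projMat {m n : ℕ} (A : Matrix (Fin m) (Fin n) ℝ) (hA : A.rank = m) :
    A * projMat A = 0 := by
  have hu := isUnit_AAT A hA
  simp only [projMat, Matrix.mul_sub, Matrix.mul_one]
  rw [← Matrix.mul_assoc, ← Matrix.mul_assoc,
    Matrix.mul_nonsing_inv _ ((Matrix.isUnit_iff_isUnit_det _).mp hu), Matrix.one_mul, sub_self]

lemma projMat_idem {m n : ℕ} (A : Matrix (Fin m) (Fin n) ℝ) (hA : A.rank = m) :
    projMat A * projMat A = projMat A := by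
  nth_rewrite 1 [projMat]
  rw [Matrix.sub_mul, Matrix.one_mul, Matrix.mul_assoc, Matrix.mul_assoc,
    A_mul_projMat A hA, Matrix.mul_zero, Matrix.mul_zero, sub_zero]

lemma projMat_mul_of {m n : ℕ} (A : Matrix (Fin m) (Fin n) ℝ)
    (Y : Matrix (Fin n) (Fin n) ℝ) (hY : A * Y = 0) : projMat A * Y = Y := by
  rw [projMat, Matrix.sub_mul, Matrix.one_mul, Matrix.mul_assoc, Matrix.mul_assoc, hY]
  simp

/-- Pythagoras for left multiplication by a symmetric idempotent. -/
lemma pyth_left {n : ℕ} (J X : Matrix (Fin n) (Fin n) ℝ) (hJT : Jᵀ = J)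
    (hJJ : J * J = J) :
    frobSq X = frobSq (J * X) + frobSq ((1 - J) * X) := by
  have hd : X = J * X + (1 - J) * X := by
    rw [Matrix.sub_mul, Matrix.one_mul]; abel
  have hcross : Matrix.trace ((J * X)ᵀ * ((1 - J) * X)) = 0 := by
    rw [transpose_mul, hJT, Matrix.mul_assoc, ← Matrix.mul_assoc J (1 - J) X]
    have : J * (1 - J) = 0 := by rw [Matrix.mul_sub, Matrix.mul_one, hJJ, sub_self]
    rw [this, Matrix.zero_mul, Matrix.mul_zero, trace_zero]
  calc frobSq X = frobSq (J * X + (1 - J) * X) := by rw [← hd]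
    _ = frobSq (J * X) + 2 * Matrix.trace ((J * X)ᵀ * ((1 - J) * X)) + frobSq ((1 - J) * X) :=
        frobSq_add _ _
    _ = frobSq (J * X) + frobSq ((1 - J) * X) := by rw [hcross]; ring

/-- Pythagoras for right multiplication by a symmetric idempotent. -/
lemma pyth_right {n : ℕ} (J X : Matrix (Fin n) (Fin n) ℝ) (hJT : Jᵀ = J)
    (hJJ : J * J = J) :
    frobSq X = frobSq (X * J) + frobSq (X * (1 - J)) := by
  have hd : X = X * J + X * (1 - J) := by
    rw [Matrix.mul_sub, Matrix.mul_one]; abel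
  have hcross : Matrix.trace ((X * J)ᵀ * (X * (1 - J))) = 0 := by
    rw [transpose_mul, hJT]
    have h1 : J * Xᵀ * (X * (1 - J)) = J * (Xᵀ * X * (1 - J)) := by
      rw [Matrix.mul_assoc, Matrix.mul_assoc]
    rw [h1, trace_mul_comm, Matrix.mul_assoc]
    have : (1 - J) * J = 0 := by rw [Matrix.sub_mul, Matrix.one_mul, hJJ, sub_self]
    rw [this, Matrix.mul_zero, trace_zero]
  calc frobSq X = frobSq (X * J + X * (1 - J)) := by rw [← hd]
    _ = frobSq (X * J) + 2 * Matrix.trace ((X * J)ᵀ * (X * (1 - J))) + frobSq (X * (1 - J)) :=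
        frobSq_add _ _
    _ = frobSq (X * J) + frobSq (X * (1 - J)) := by rw [hcross]; ring

theorem stmt_8 {m n : ℕ} (A : Matrix (Fin m) (Fin n) ℝ) (hA : A.rank = m)
    (G : Matrix (Fin n) (Fin n) ℝ) (hG : G.IsSymm)
    (P : Matrix (Fin n) (Fin n) ℝ)
    -- `P` is the Euclidean projection of `J * G * J` onto the PSD cone:
    (hP : P.PosSemidef)
    (hPmin : ∀ Y : Matrix (Fin n) (Fin n) ℝ, Y.PosSemidef →
        frobSq (projMat A * G * projMat A - P) ≤ frobSq (projMat A * G * projMat A - Y)) :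
    -- then `P` is the Euclidean projection of `G` onto `{X ⪰ 0 : A X = 0}`:
    (P.PosSemidef ∧ A * P = 0) ∧
      ∀ Y : Matrix (Fin n) (Fin n) ℝ, Y.PosSemidef → A * Y = 0 →
        frobSq (G - P) ≤ frobSq (G - Y) := by
  set J := projMat A with hJ
  have hJT : Jᵀ = J := projMat_transpose A
  have hJJ : J * J = J := projMat_idem A hA
  have hAJ : A * J = 0 := A_mul_projMat A hA
  set M := J * G * J with hM
  have hJM : J * M = M := by rw [hM, ← Matrix.mul_assoc, ← Matrix.mul_assoc, hJJ]
  have hMJ : M * J = M := by rw [hM, Matrix.mul_assoc, Matrix.mul_assoc, hJJ, Matrix.mul_assoc]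
  -- the candidate Q = J P J is PSD
  have hQ : (J * P * J).PosSemidef := by
    have := hP.mul_mul_conjTranspose_same J
    rwa [conjTranspose_eq_transpose_of_trivial, hJT] at this
  -- key: J (M - P) J = M - J P J
  have hJXJ : J * (M - P) * J = M - J * P * J := by
    rw [Matrix.mul_sub, Matrix.sub_mul, hJM, hMJ]
  -- minimality vs Q gives equality through the Pythagorean decomposition
  have h1 : frobSq (M - P) ≤ frobSq (M - (J * P * J)) := hPmin _ hQ
  have hpy1 : frobSq (M - P)
      = frobSq (J * (M - P)) + frobSq ((1 - J) * (M - P)) := pyth_left J _ hJT hJJ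
  have hpy2 : frobSq (J * (M - P))
      = frobSq (J * (M - P) * J) + frobSq (J * (M - P) * (1 - J)) := pyth_right J _ hJT hJJ
  have h2 : frobSq (J * (M - P) * J) ≤ frobSq (M - P) := by
    rw [hpy1, hpy2]
    have := frobSq_nonneg ((1 - J) * (M - P))
    have := frobSq_nonneg (J * (M - P) * (1 - J))
    linarith
  have heq : frobSq (M - P) = frobSq (J * (M - P) * J) := by
    rw [hJXJ] at *
    linarith
  have hz1 : frobSq ((1 - J) * (M - P)) = 0 := by
    rw [hpy1, hpy2] at heq
    have := frobSq_nonneg ((1 - J) * (M - P))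
    have := frobSq_nonneg (J * (M - P) * (1 - J))
    linarith
  have hz2 : frobSq (J * (M - P) * (1 - J)) = 0 := by
    rw [hpy1, hpy2] at heq
    have := frobSq_nonneg ((1 - J) * (M - P))
    have := frobSq_nonneg (J * (M - P) * (1 - J))
    linarith
  have hz1' : (1 - J) * (M - P) = 0 := frobSq_eq_zero hz1
  have hz2' : J * (M - P) * (1 - J) = 0 := frobSq_eq_zero hz2
  -- conclude M - P = J (M - P) J, hence P = J P J
  have hXfix : M - P = J * (M - P) * J := by
    have e1 : M - P = J * (M - P) := by
      have h := hz1'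
      rw [Matrix.sub_mul, Matrix.one_mul] at h
      exact sub_eq_zero.mp h
    have e2 : J * (M - P) = J * (M - P) * J := by
      have : J * (M - P) * (1 - J) = J * (M - P) - J * (M - P) * J := by
        rw [Matrix.mul_sub, Matrix.mul_one]
      rw [this] at hz2'
      exact (sub_eq_zero.mp hz2')
    exact e1.trans e2
  have hPJ : P = J * P * J := by
    have h := hXfix
    rw [hJXJ] at h
    exact sub_right_injective h
  have hAP : A * P = 0 := by
    rw [hPJ, ← Matrix.mul_assoc, ← Matrix.mul_assoc, hAJ, Matrix.zero_mul, Matrix.zero_mul]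
  -- orthogonal decomposition of the objective over the feasible set
  have hMT : Mᵀ = M := by
    rw [hM, transpose_mul, transpose_mul, hJT, hG.eq, ← Matrix.mul_assoc]
  have hdecomp : ∀ Y : Matrix (Fin n) (Fin n) ℝ, Y.PosSemidef → A * Y = 0 →
      frobSq (G - Y) = frobSq (G - M) + frobSq (M - Y) := by
    intro Y hYpsd hAY
    have hYT : Yᵀ = Y := by
      have := hYpsd.1.eq
      rwa [conjTranspose_eq_transpose_of_trivial] at this
    have hJY : J * Y = Y := projMat_mul_of A Y hAY
    have hYJ : Y * J = Y := by
      have h := congrArg Matrix.transpose hJY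
      rw [transpose_mul, hJT, hYT] at h
      exact h
    have hJYJ : J * (M - Y) * J = M - Y := by
      rw [Matrix.mul_sub, Matrix.sub_mul, hJM, hMJ, hJY, hYJ]
    have hWT : (G - M)ᵀ = G - M := by rw [transpose_sub, hMT, hG.eq]
    have hJWJ : J * (G - M) * J = 0 := by
      rw [Matrix.mul_sub, Matrix.sub_mul, hJM, hMJ]
      exact sub_eq_zero_of_eq rfl
    have hcross : Matrix.trace ((G - M)ᵀ * (M - Y)) = 0 := by
      rw [hWT, ← hJYJ]
      have e : (G - M) * (J * (M - Y) * J) = ((G - M) * J * (M - Y)) * J := by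
        simp only [Matrix.mul_assoc]
      rw [e, trace_mul_comm]
      have e2 : J * ((G - M) * J * (M - Y)) = (J * (G - M) * J) * (M - Y) := by
        simp only [Matrix.mul_assoc]
      rw [e2, hJWJ, Matrix.zero_mul, trace_zero]
    have hd : G - Y = (G - M) + (M - Y) := by abel
    rw [hd, frobSq_add, hcross]
    ring
  refine ⟨⟨hP, hAP⟩, ?_⟩
  intro Y hYpsd hAY
  have hPfeas := hdecomp P hP hAP
  have hYfeas := hdecomp Y hYpsd hAY
  rw [hPfeas, hYfeas]
  have := hPmin Y hYpsd
  linarith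
end

section
/- Let X* ∈ Sym(n,ℝ) be PSD with AX* = 0 for full row rank A, written as X* = UᵀΘ*U with Θ* PSD as in the facial parametrization. Then the normal cone to the face F ∩ S₊ⁿ = {X ⪰ 0 : AX = 0} at X* equals { S ∈ Sym(n,ℝ) : −USUᵀ ⪰ 0 and USX* = 0 }. -/
/-! The face `{Y ⪰ 0 : A Y = 0}` is an additive cone containing `X*`, so `S` is normal to it at
`X*` iff `⟨S, X*⟩ = 0` and `⟨S, Y⟩ ≤ 0` on the face. Since the rows of `U` span `ker A`, the face
is `{Uᵀ Ψ U : Ψ ⪰ 0}`, and `⟨S, Uᵀ Ψ U⟩ = ⟨U S Uᵀ, Ψ⟩`; self-duality of the PSD cone turns the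
second condition into `-U S Uᵀ ⪰ 0`. For PSD matrices, `⟨M, N⟩ = 0` forces `M N = 0`, so
`⟨S, X*⟩ = 0` becomes `U S Uᵀ Θ = 0`, which is `U S X* = 0` because `U` has full row rank. -/

open Matrix

theorem AddSubmonoid.forall_map_sub_nonpos_iff {M G : Type*} [AddCommGroup M] [AddCommGroup G]
    [PartialOrder G] [IsOrderedAddMonoid G] (K : AddSubmonoid M) (f : M →+ G) {x : M}
    (hx : x ∈ K) : (∀ y ∈ K, f (y - x) ≤ 0) ↔ f x = 0 ∧ ∀ y ∈ K, f y ≤ 0 := by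
  constructor
  · intro h
    have h_nonneg : 0 ≤ f x := by simpa using h 0 K.zero_mem
    have h_nonpos : f x ≤ 0 := by simpa using h (x + x) (K.add_mem hx hx)
    exact ⟨le_antisymm h_nonpos h_nonneg, fun y hy => by simpa using h (y + x) (K.add_mem hy hx)⟩
  · rintro ⟨hfx, h⟩ y hy
    rw [map_sub, hfx, sub_zero]
    exact h y hy

namespace Matrix

variable {ι κ μ : Type*} [Fintype ι] [Fintype κ]

section Rank

variable {R : Type*} [Field R]

theorem linearIndependent_row_of_rank_eq {U : Matrix κ ι R} (hU : U.rank = Fintype.card κ) :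
    LinearIndependent R U.row := by
  rw [linearIndependent_iff_card_eq_finrank_span, Set.finrank, ← rank_eq_finrank_span_row, hU]

theorem eq_zero_of_mul_eq_zero_of_rank_eq {U : Matrix κ ι R} (hU : U.rank = Fintype.card κ)
    {N : Matrix μ κ R} (h : N * U = 0) : N = 0 := by
  ext i j
  have hrow : N i ᵥ* U = (0 : κ → R) ᵥ* U := by
    rw [zero_vecMul]
    exact congrFun h i
  exact congrFun (vecMul_injective_iff.mpr (linearIndependent_row_of_rank_eq hU) hrow) j

theorem range_vecMulLinear_eq_ker_mulVecLin {A : Matrix μ ι R} {U : Matrix κ ι R}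
    (hrank : A.rank + U.rank = Fintype.card ι) (hAU : A * Uᵀ = 0) :
    LinearMap.range U.vecMulLinear = LinearMap.ker A.mulVecLin := by
  refine Submodule.eq_of_le_of_finrank_eq ?_ ?_
  · rintro _ ⟨w, rfl⟩
    change A *ᵥ (w ᵥ* U) = 0
    rw [← mulVec_transpose, mulVec_mulVec, hAU, zero_mulVec]
  · have := LinearMap.finrank_range_add_finrank_ker A.mulVecLin
    rw [Module.finrank_fintype_fun_eq_card] at this
    rw [range_vecMulLinear, ← rank_eq_finrank_span_row]
    change A.rank + _ = _ at this
    omega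

end Rank

section PosSemidef

open scoped MatrixOrder in
theorem PosSemidef.exists_eq_transpose_mul_self {Y : Matrix ι ι ℝ} (hY : Y.PosSemidef) :
    ∃ B : Matrix ι ι ℝ, Y = Bᵀ * B := by
  classical
  obtain ⟨B, hB⟩ := CStarAlgebra.nonneg_iff_eq_star_mul_self.mp hY.nonneg
  rw [star_eq_conjTranspose, conjTranspose_eq_transpose_of_trivial] at hB
  exact ⟨B, hB⟩

theorem trace_transpose_mul_self_mul_transpose_mul_self [Fintype μ] (B : Matrix κ ι ℝ)
    (C : Matrix μ ι ℝ) : (Bᵀ * B * (Cᵀ * C)).trace = ((B * Cᵀ)ᵀ * (B * Cᵀ)).trace := by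
  rw [transpose_mul, transpose_transpose, ← Matrix.mul_assoc, trace_mul_comm]
  simp only [Matrix.mul_assoc]

theorem PosSemidef.trace_mul_nonneg {M N : Matrix ι ι ℝ} (hM : M.PosSemidef) (hN : N.PosSemidef) :
    0 ≤ (M * N).trace := by
  obtain ⟨B, rfl⟩ := hM.exists_eq_transpose_mul_self
  obtain ⟨C, rfl⟩ := hN.exists_eq_transpose_mul_self
  rw [trace_transpose_mul_self_mul_transpose_mul_self]
  simpa using (posSemidef_conjTranspose_mul_self (B * Cᵀ)).trace_nonneg

theorem PosSemidef.trace_mul_eq_zero_iff {M N : Matrix ι ι ℝ} (hM : M.PosSemidef)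
    (hN : N.PosSemidef) : (M * N).trace = 0 ↔ M * N = 0 := by
  refine ⟨fun h => ?_, fun h => by rw [h, trace_zero]⟩
  obtain ⟨B, rfl⟩ := hM.exists_eq_transpose_mul_self
  obtain ⟨C, rfl⟩ := hN.exists_eq_transpose_mul_self
  rw [trace_transpose_mul_self_mul_transpose_mul_self] at h
  have hBC : B * Cᵀ = 0 := by
    simpa using trace_conjTranspose_mul_self_eq_zero_iff.mp (by simpa using h)
  calc Bᵀ * B * (Cᵀ * C) = Bᵀ * (B * Cᵀ) * C := by simp only [Matrix.mul_assoc]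
    _ = 0 := by rw [hBC, Matrix.mul_zero, Matrix.zero_mul]

theorem posSemidef_iff_forall_trace_mul_nonneg {M : Matrix ι ι ℝ} (hM : M.IsHermitian) :
    M.PosSemidef ↔ ∀ N : Matrix ι ι ℝ, N.PosSemidef → 0 ≤ (M * N).trace := by
  refine ⟨fun hM' N hN => hM'.trace_mul_nonneg hN, fun h => ?_⟩
  refine .of_dotProduct_mulVec_nonneg hM fun x => ?_
  simpa [mul_vecMulVec, dotProduct_comm] using h _ (posSemidef_vecMulVec_self_star x)

end PosSemidef

theorem trace_mul_transpose_mul_mul (S : Matrix ι ι ℝ) (U : Matrix κ ι ℝ) (Ψ : Matrix κ κ ℝ) :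
    (S * (Uᵀ * Ψ * U)).trace = (U * S * Uᵀ * Ψ).trace := by
  rw [← Matrix.mul_assoc, trace_mul_comm]
  simp only [Matrix.mul_assoc]

def psdFace (A : Matrix μ ι ℝ) : AddSubmonoid (Matrix ι ι ℝ) where
  carrier := {Y | Y.PosSemidef ∧ A * Y = 0}
  zero_mem' := ⟨.zero, Matrix.mul_zero A⟩
  add_mem' hY hZ := ⟨hY.1.add hZ.1, by rw [Matrix.mul_add, hY.2, hZ.2, add_zero]⟩

theorem mem_psdFace {A : Matrix μ ι ℝ} {Y : Matrix ι ι ℝ} :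
    Y ∈ psdFace A ↔ Y.PosSemidef ∧ A * Y = 0 :=
  Iff.rfl

section psdFace

variable {A : Matrix μ ι ℝ} {U : Matrix κ ι ℝ}

theorem transpose_mul_mul_mem_psdFace (hAU : A * Uᵀ = 0) {Ψ : Matrix κ κ ℝ}
    (hΨ : Ψ.PosSemidef) : Uᵀ * Ψ * U ∈ psdFace A := by
  refine ⟨by simpa using hΨ.conjTranspose_mul_mul_same U, ?_⟩
  rw [← Matrix.mul_assoc, ← Matrix.mul_assoc, hAU, Matrix.zero_mul, Matrix.zero_mul]

theorem exists_eq_transpose_mul_mul_of_mem_psdFace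
    (hker : LinearMap.range U.vecMulLinear = LinearMap.ker A.mulVecLin) {Y : Matrix ι ι ℝ}
    (hY : Y ∈ psdFace A) : ∃ Ψ : Matrix κ κ ℝ, Ψ.PosSemidef ∧ Y = Uᵀ * Ψ * U := by
  obtain ⟨⟨B, rfl⟩, hAY⟩ := And.imp_left PosSemidef.exists_eq_transpose_mul_self hY
  have hBA : B * Aᵀ = 0 := by
    have : (B * Aᵀ)ᴴ * (B * Aᵀ) = A * (Bᵀ * B) * Aᵀ := by simp [Matrix.mul_assoc]
    rwa [hAY, Matrix.zero_mul, conjTranspose_mul_self_eq_zero] at this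
  have hrow : ∀ i, B i ∈ LinearMap.range U.vecMulLinear := fun i => by
    rw [hker, LinearMap.mem_ker, mulVecLin_apply, ← vecMul_transpose]
    exact congrFun hBA i
  choose W hW using hrow
  have hB : B = Matrix.of W * U := by
    ext i j
    exact (congrFun (hW i) j).symm
  rw [hB, transpose_mul]
  refine ⟨(Matrix.of W)ᵀ * Matrix.of W, ?_, by simp only [Matrix.mul_assoc]⟩
  simpa using posSemidef_conjTranspose_mul_self (Matrix.of W)

theorem forall_mem_psdFace_trace_mul_nonpos_iff
    (hker : LinearMap.range U.vecMulLinear = LinearMap.ker A.mulVecLin) (hAU : A * Uᵀ = 0)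
    {S : Matrix ι ι ℝ} (hS : S.IsSymm) :
    (∀ Y ∈ psdFace A, (S * Y).trace ≤ 0) ↔ (-(U * S * Uᵀ)).PosSemidef := by
  have hUSU : (U * S * Uᵀ).IsHermitian := by
    simpa using isHermitian_conjTranspose_mul_mul Uᵀ (show S.IsHermitian by simpa using hS)
  rw [posSemidef_iff_forall_trace_mul_nonneg hUSU.neg]
  simp only [neg_mul, trace_neg, neg_nonneg]
  constructor
  · intro h Ψ hΨ
    simpa [trace_mul_transpose_mul_mul] using h _ (transpose_mul_mul_mem_psdFace hAU hΨ)
  · intro h Y hY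
    obtain ⟨Ψ, hΨ, rfl⟩ := exists_eq_transpose_mul_mul_of_mem_psdFace hker hY
    simpa [trace_mul_transpose_mul_mul] using h Ψ hΨ

theorem trace_mul_transpose_mul_mul_eq_zero_iff (hU : U.rank = Fintype.card κ)
    {S : Matrix ι ι ℝ} (hS : (-(U * S * Uᵀ)).PosSemidef) {Θ : Matrix κ κ ℝ}
    (hΘ : Θ.PosSemidef) : (S * (Uᵀ * Θ * U)).trace = 0 ↔ U * S * (Uᵀ * Θ * U) = 0 := by
  rw [trace_mul_transpose_mul_mul, ← neg_eq_zero, ← trace_neg, ← neg_mul,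
    hS.trace_mul_eq_zero_iff hΘ, neg_mul, neg_eq_zero]
  simp only [← Matrix.mul_assoc]
  exact ⟨fun h => by rw [h, Matrix.zero_mul], eq_zero_of_mul_eq_zero_of_rank_eq hU⟩

end psdFace

end Matrix

theorem stmt_9 {m n : ℕ} (A : Matrix (Fin m) (Fin n) ℝ)
    (U : Matrix (Fin (n - m)) (Fin n) ℝ)
    (hA : A.rank = m) (hU : U.rank = n - m) (hAU : A * Uᵀ = 0)
    (Θ : Matrix (Fin (n - m)) (Fin (n - m)) ℝ) (hΘ : Θ.PosSemidef)
    (Xs : Matrix (Fin n) (Fin n) ℝ) (hXs : Xs = Uᵀ * Θ * U) :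
    {S : Matrix (Fin n) (Fin n) ℝ | S.IsSymm ∧
        ∀ Y : Matrix (Fin n) (Fin n) ℝ, Y.PosSemidef → A * Y = 0 →
          Matrix.trace (Sᵀ * (Y - Xs)) ≤ 0}
      = {S : Matrix (Fin n) (Fin n) ℝ | S.IsSymm ∧
          (-(U * S * Uᵀ)).PosSemidef ∧ U * S * Xs = 0} := by
  have hmn : m ≤ n := by simpa [hA] using A.rank_le_card_width
  have hker := range_vecMulLinear_eq_ker_mulVecLin (by simp [hA, hU]; omega) hAU
  have hU' : U.rank = Fintype.card (Fin (n - m)) := by simpa using hU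
  subst hXs
  ext S
  refine and_congr_right fun hS => ?_
  let f := (traceAddMonoidHom (Fin n) ℝ).comp (AddMonoidHom.mulLeft Sᵀ)
  calc (∀ Y : Matrix (Fin n) (Fin n) ℝ, Y.PosSemidef → A * Y = 0 →
          Matrix.trace (Sᵀ * (Y - Uᵀ * Θ * U)) ≤ 0)
      ↔ ∀ Y ∈ psdFace A, f (Y - Uᵀ * Θ * U) ≤ 0 := by simp [f, mem_psdFace]
    _ ↔ f (Uᵀ * Θ * U) = 0 ∧ ∀ Y ∈ psdFace A, f Y ≤ 0 :=
      (psdFace A).forall_map_sub_nonpos_iff f (transpose_mul_mul_mem_psdFace hAU hΘ)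
    _ ↔ _ := by
      simp only [f, AddMonoidHom.comp_apply, AddMonoidHom.coe_mulLeft, traceAddMonoidHom_apply,
        hS.eq, forall_mem_psdFace_trace_mul_nonpos_iff hker hAU hS]
      exact and_comm.trans (and_congr_right fun hneg =>
        trace_mul_transpose_mul_mul_eq_zero_iff hU' hneg hΘ)
end

section
/- Let B_γ, for γ in an index set, be a partition of coordinates, and consider the affine subspace L of vectors that are constant on each block B_γ, together with a distinguished block B_{γ₀} on which the value is fixed to 1. Let N be the nonnegative orthant. Then the Euclidean projection onto L ∩ N equals the composition Π_N ∘ Π_L, where Π_L replaces entries in each block B_γ (γ ≠ γ₀) by the block average and sets entries in B_{γ₀} to 1, and Π_N takes the componentwise maximum with 0. -/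
open Finset

lemma key_block {d : ℕ} (B : Finset (Fin d)) (hB : B.Nonempty) (z : Fin d → ℝ)
    (c : ℝ) (hc : 0 ≤ c) :
    ∑ i ∈ B, (z i - max ((∑ j ∈ B, z j) / (B.card : ℝ)) 0) ^ 2 ≤
      ∑ i ∈ B, (z i - c) ^ 2 := by
  have hn : (0 : ℝ) < (B.card : ℝ) := by
    exact_mod_cast Finset.card_pos.mpr hB
  set n : ℝ := (B.card : ℝ) with hn'
  set S : ℝ := ∑ j ∈ B, z j with hS'
  set m : ℝ := S / n with hm'
  set v : ℝ := max m 0 with hv'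
  have expand : ∀ t : ℝ, ∑ i ∈ B, (z i - t) ^ 2 =
      (∑ i ∈ B, (z i) ^ 2) - 2 * t * S + n * t ^ 2 := by
    intro t
    rw [hS', hn', Finset.mul_sum, ← Finset.sum_sub_distrib]
    rw [show ((B.card : ℝ) * t ^ 2) = ∑ _i ∈ B, t ^ 2 by
      rw [Finset.sum_const, nsmul_eq_mul]]
    rw [← Finset.sum_add_distrib]
    apply Finset.sum_congr rfl
    intro i _
    ring
  have hSm : S = n * m := by
    rw [hm']; field_simp
  have hvm : (v - m) ^ 2 ≤ (c - m) ^ 2 := by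
    rcases le_or_gt 0 m with h | h
    · rw [hv', max_eq_left h]
      simpa using sq_nonneg (c - m)
    · rw [hv', max_eq_right h.le]
      nlinarith
  rw [expand v, expand c, hSm]
  nlinarith [mul_le_mul_of_nonneg_left hvm hn.le]

theorem stmt_10 {d : ℕ} {Γ : Type*} [DecidableEq Γ] (f : Fin d → Γ) (γ₀ : Γ)
    (z : Fin d → ℝ) :
    let L : Set (Fin d → ℝ) :=
      {x | (∀ i j, f i = f j → x i = x j) ∧ ∀ i, f i = γ₀ → x i = 1}
    let N : Set (Fin d → ℝ) := {x | ∀ i, 0 ≤ x i}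
    let PL : (Fin d → ℝ) → (Fin d → ℝ) := fun y i =>
      if f i = γ₀ then 1
      else (∑ j ∈ Finset.univ.filter (fun j => f j = f i), y j) /
        ((Finset.univ.filter (fun j => f j = f i)).card : ℝ)
    let PN : (Fin d → ℝ) → (Fin d → ℝ) := fun y i => max (y i) 0
    PN (PL z) ∈ L ∩ N ∧
      ∀ x ∈ L ∩ N, ∑ i, (z i - PN (PL z) i) ^ 2 ≤ ∑ i, (z i - x i) ^ 2 := by
  intro L N PL PN
  constructor
  · refine ⟨⟨?_, ?_⟩, ?_⟩
    · intro i j hij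
      simp only [PN, PL]
      rw [hij]
    · intro i hi
      simp [PN, PL, hi]
    · intro i
      exact le_max_right _ _
  · rintro x ⟨⟨hx1, hx2⟩, hxN⟩
    have hfib : ∀ g : Fin d → ℝ, ∑ i, g i =
        ∑ γ ∈ Finset.univ.image f,
          ∑ i ∈ Finset.univ.filter (fun i => f i = γ), g i := by
      intro g
      exact (Finset.sum_fiberwise_of_maps_to
        (fun i _ => Finset.mem_image_of_mem f (Finset.mem_univ i)) g).symm
    rw [hfib fun i => (z i - PN (PL z) i) ^ 2, hfib fun i => (z i - x i) ^ 2]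
    apply Finset.sum_le_sum
    intro γ hγ
    obtain ⟨i₀, _, hi₀⟩ := Finset.mem_image.mp hγ
    by_cases hγ0 : γ = γ₀
    · apply le_of_eq
      apply Finset.sum_congr rfl
      intro i hi
      have hfi : f i = γ := (Finset.mem_filter.mp hi).2
      have h1 : x i = 1 := hx2 i (hfi.trans hγ0)
      have h2 : PN (PL z) i = 1 := by
        simp [PN, PL, hfi.trans hγ0]
      rw [h1, h2]
    · set B := Finset.univ.filter (fun i => f i = γ) with hB'
      have hBne : B.Nonempty := ⟨i₀, Finset.mem_filter.mpr ⟨Finset.mem_univ _, hi₀⟩⟩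
      have hxc : ∀ i ∈ B, x i = x i₀ := by
        intro i hi
        exact hx1 i i₀ (((Finset.mem_filter.mp hi).2).trans hi₀.symm)
      have hw : ∀ i ∈ B, PN (PL z) i = max ((∑ j ∈ B, z j) / (B.card : ℝ)) 0 := by
        intro i hi
        have hfi : f i = γ := (Finset.mem_filter.mp hi).2
        have hne : ¬ f i = γ₀ := by rw [hfi]; exact hγ0
        simp only [PN, PL, if_neg hne, hfi, hB']
        rw [if_neg hγ0]
      calc ∑ i ∈ B, (z i - PN (PL z) i) ^ 2
          = ∑ i ∈ B, (z i - max ((∑ j ∈ B, z j) / (B.card : ℝ)) 0) ^ 2 := by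
            apply Finset.sum_congr rfl; intro i hi; rw [hw i hi]
        _ ≤ ∑ i ∈ B, (z i - x i₀) ^ 2 := key_block B hBne z (x i₀) (hxN i₀)
        _ = ∑ i ∈ B, (z i - x i) ^ 2 := by
            apply Finset.sum_congr rfl; intro i hi; rw [hxc i hi]
end

section
/- If J is a face of the convex cone co(K), where K is a nonempty cone of symmetric matrices, then co(K ∩ J) = J. -/
/-!
A face `J` of `co K` is an extreme subset, so `co K \ J` is convex; hence `co (K \ J)` misses `J`.
Every `x ∈ J` lies on a segment from `co (K ∩ J)` to `co (K \ J)`, and extremality of `J` forces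
`x` to be the endpoint in `co (K ∩ J)`.
-/

open Set

section

variable {𝕜 E : Type*} [Field 𝕜] [LinearOrder 𝕜] [IsStrictOrderedRing 𝕜] [AddCommGroup E]
  [Module 𝕜 E]

theorem isExtreme_of_smul_add_one_sub_smul_mem {A B : Set E} (hBA : B ⊆ A)
    (h : ∀ x ∈ A, ∀ y ∈ A, ∀ t : 𝕜, 0 < t → t < 1 → t • x + (1 - t) • y ∈ B → x ∈ B ∧ y ∈ B) :
    IsExtreme 𝕜 A B := by
  refine ⟨hBA, fun x hx y hy z hz ⟨a, b, ha, hb, hab, hzab⟩ => ?_⟩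
  obtain rfl : b = 1 - a := by linarith
  exact (h x hx y hy a ha (by linarith) (hzab ▸ hz)).1

theorem IsExtreme.convexHull_inter_eq {K B : Set E} (hB : Convex 𝕜 B)
    (hKB : IsExtreme 𝕜 (convexHull 𝕜 K) B) : convexHull 𝕜 (K ∩ B) = B := by
  refine (convexHull_min inter_subset_right hB).antisymm fun x hxB => ?_
  have hxK := hKB.subset hxB
  have hdiff : convexHull 𝕜 (K \ B) ⊆ convexHull 𝕜 K \ B :=
    convexHull_min (fun y hy => ⟨subset_convexHull 𝕜 K hy.1, hy.2⟩)
      (hKB.convex_sdiff (convex_convexHull 𝕜 K))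
  rcases (K ∩ B).eq_empty_or_nonempty with hempty | hne
  · have hK : K ⊆ K \ B := fun y hy => ⟨hy, fun hyB => hempty.subset ⟨hy, hyB⟩⟩
    exact absurd hxB (hdiff (convexHull_mono hK hxK)).2
  rcases (K \ B).eq_empty_or_nonempty with hKsub | hne'
  · rwa [inter_eq_left.mpr (sdiff_eq_empty.mp hKsub)]
  rw [← inter_union_sdiff K B, convexHull_union hne hne'] at hxK
  obtain ⟨a, ha, b, hb, hxab⟩ := mem_convexJoin.mp hxK
  obtain ⟨hbK, hbB⟩ := hdiff hb
  rw [← insert_endpoints_openSegment] at hxab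
  rcases hxab with rfl | rfl | hopen
  · exact ha
  · exact absurd hxB hbB
  · exact absurd (hKB.right_mem_of_mem_openSegment (convexHull_mono inter_subset_left ha)
      hbK hxB hopen) hbB

end

theorem stmt_13_general {n : ℕ} (K J : Set (Matrix (Fin n) (Fin n) ℝ))
    (hJsub : J ⊆ convexHull ℝ K) (hJconv : Convex ℝ J)
    (hface : ∀ x ∈ convexHull ℝ K, ∀ y ∈ convexHull ℝ K, ∀ t : ℝ, 0 < t → t < 1 →
        t • x + (1 - t) • y ∈ J → x ∈ J ∧ y ∈ J) :
    convexHull ℝ (K ∩ J) = J :=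
  (isExtreme_of_smul_add_one_sub_smul_mem hJsub hface).convexHull_inter_eq hJconv

theorem stmt_13 {n : ℕ} (K J : Set (Matrix (Fin n) (Fin n) ℝ))
    (hKne : K.Nonempty)
    (hKcone : ∀ X ∈ K, ∀ c : ℝ, 0 < c → c • X ∈ K)
    (hJsub : J ⊆ convexHull ℝ K) (hJconv : Convex ℝ J)
    (hface : ∀ x ∈ convexHull ℝ K, ∀ y ∈ convexHull ℝ K, ∀ t : ℝ, 0 < t → t < 1 →
        t • x + (1 - t) • y ∈ J → x ∈ J ∧ y ∈ J) :
    convexHull ℝ (K ∩ J) = J :=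
  stmt_13_general K J hJsub hJconv hface
end
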